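/- arXiv:2407.04979 — 2 statements merged into one kernel-verified Lean document; each statement's English description precedes it below -/
import Mathlib

section
/- Let p ∈ ℝ with p ∉ {−(k+1)/2 : k ∈ ℕ₀}, let P be a real 2×2 matrix, ψ ∈ ℝ, and let ((αₙ,βₙ))ₙ≥₀ be the unique solution of the recurrence (R). Then the following are equivalent: (i) the upper-left entry of P vanishes, i.e. (1,0)·P·(1,0)ᵀ = 0; (ii) β₁ = 0; (iii) βₙ = 0 for all n ≥ 0 (equivalently, the generating function B vanishes identically). -/
open Matrix MeasureTheory Filter

noncomputable section

def matJ : Matrix (Fin 2) (Fin 2) ℝ := !![0, -1; 1, 0]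

def Dpsi (p ψ a : ℝ) : Matrix (Fin 2) (Fin 2) ℝ :=
  if p = 0 then !![1, 0; ψ * Real.log a, 1]
  else !![1, 0; ψ / (2 * p), 1] * !![a ^ p, 0; 0, a ^ (-p)] * !![1, 0; -ψ / (2 * p), 1]

def HPpsi (p ψ : ℝ) (P : Matrix (Fin 2) (Fin 2) ℝ) (a : ℝ) : Matrix (Fin 2) (Fin 2) ℝ :=
  Dpsi p ψ a * P * (Dpsi p ψ a)ᵀ

def SatRec (p : ℝ) (P : Matrix (Fin 2) (Fin 2) ℝ) (ψ : ℝ) (α β : ℕ → ℝ) : Prop :=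
  α 0 = 1 ∧ β 0 = 0 ∧ ∀ n : ℕ,
    !![α (n + 1), β (n + 1)] =
      (-1 / (((n : ℝ) + 1) * (2 * p + (n : ℝ) + 1))) •
        (!![α n, β n] * (P * matJ * !![2 * p + (n : ℝ) + 1, 0; ψ, (n : ℝ) + 1]))

def genF (c : ℕ → ℝ) (z : ℂ) : ℂ := ∑' n : ℕ, (c n : ℂ) * z ^ n

def rowAB (p ψ : ℝ) (α β : ℕ → ℝ) (a : ℝ) (z : ℂ) : Matrix (Fin 1) (Fin 2) ℂ :=
  !![((a ^ p : ℝ) : ℂ) * genF α ((a : ℂ) * z), ((a ^ p : ℝ) : ℂ) * genF β ((a : ℂ) * z)] *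
    ((Dpsi p ψ a)⁻¹).map Complex.ofReal

/- The second column of `P * J * [[2p+n+1, 0], [ψ, n+1]]` is `(n+1) • (-P 0 0, -P 1 0)`, so the
factor `n + 1` cancels and `β (n+1)` depends only on the first column of `P`. Hence `β ≡ 0` as
soon as `P 0 0 = 0`, while `β 1 = P 0 0 / (2p + 1)` with `2p + 1 ≠ 0`. -/

namespace SatRec

variable {p ψ : ℝ} {P : Matrix (Fin 2) (Fin 2) ℝ} {α β : ℕ → ℝ}

/-- Holds even when `2p + n + 1 = 0`, both sides then being `0` by the junk value of `x / 0`. -/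
theorem beta_succ (hrec : SatRec p P ψ α β) (n : ℕ) :
    β (n + 1) = (P 0 0 * α n + P 1 0 * β n) / (2 * p + n + 1) := by
  have h := congrFun (congrFun (hrec.2.2 n) 0) 1
  simp only [Matrix.smul_apply, Matrix.mul_apply, Fin.sum_univ_two, matJ, of_apply, cons_val',
    cons_val_zero, cons_val_one, empty_val', cons_val_fin_one, smul_eq_mul] at h
  rw [h]
  have hn : (n : ℝ) + 1 ≠ 0 := by positivity
  rcases eq_or_ne (2 * p + n + 1) 0 with hd | hd
  · simp [hd]
  · field_simp
    ring

theorem beta_one (hrec : SatRec p P ψ α β) : β 1 = P 0 0 / (2 * p + 1) := by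
  simpa [hrec.1, hrec.2.1] using hrec.beta_succ 0

theorem beta_eq_zero (hrec : SatRec p P ψ α β) (hP : P 0 0 = 0) (n : ℕ) : β n = 0 := by
  induction n with
  | zero => exact hrec.2.1
  | succ k ih => simp [hrec.beta_succ k, hP, ih]

end SatRec

/-- vanishing of the upper-left entry of P is equivalent to β₁ = 0
and to the vanishing of the whole sequence (βₙ). -/
theorem statement5 (p : ℝ) (hp : ∀ k : ℕ, p ≠ -((k : ℝ) + 1) / 2)
    (P : Matrix (Fin 2) (Fin 2) ℝ) (ψ : ℝ) (α β : ℕ → ℝ)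
    (hrec : SatRec p P ψ α β) :
    List.TFAE [P 0 0 = 0, β 1 = 0, ∀ n : ℕ, β n = 0] := by
  have h2p : 2 * p + 1 ≠ 0 := fun h => hp 0 (by push_cast; linarith)
  tfae_have 1 → 3 := hrec.beta_eq_zero
  tfae_have 3 → 2 := fun h => h 1
  tfae_have 2 → 1 := by
    rw [hrec.beta_one, div_eq_zero_iff]
    exact fun h => h.resolve_right h2p
  tfae_finish
end
end

section
/- Let p ∈ ℝ with p ∉ {−(k+1)/2 : k ∈ ℕ₀} and p ≠ 0, let P = [[κ₁,κ₃],[κ₃,κ₂]] be a real symmetric 2×2 matrix with det P ≠ 0, and let ψ ∈ ℝ. Let κ ∈ ℂ with κ² = det P, set σ := 2p·κ₃ − ψ·κ₁ and α := σ/(2iκ) + p. Then for all z ∈ ℂ: M(α, 2p, −2iκz) − (ψκ₁/(2p(2p+1)))·z·M(α+1, 2p+2, −2iκz) = (1/2)·M(α, 2p+1, −2iκz) + (1/2)·M(α+1, 2p+1, −2iκz) − (κ₃/(2p+1))·z·M(α+1, 2p+2, −2iκz). -/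
open Matrix MeasureTheory Filter

noncomputable section

/-- The rising factorial (Pochhammer symbol) (x)ₙ in ℂ. -/
def risingFac (x : ℂ) : ℕ → ℂ
  | 0 => 1
  | n + 1 => risingFac x n * (x + n)

/-- Kummer's confluent hypergeometric function M(a,b,z) = Σ (a)ₙ/(b)ₙ · zⁿ/n!. -/
def kummerM (a b z : ℂ) : ℂ :=
  ∑' n : ℕ, risingFac a n / risingFac b n * z ^ n / (n.factorial : ℂ)

/-- The confluent hypergeometric limit function ₀F₁(b,z) = Σ 1/(b)ₙ · zⁿ/n!. -/
def hyp0F1 (b z : ℂ) : ℂ :=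
  ∑' n : ℕ, (1 / risingFac b n) * z ^ n / (n.factorial : ℂ)

/-!
The identity is the sum of two contiguous relations,
`M(a, b, w) - M(a, b+1, w) = a w / (b (b+1)) · M(a+1, b+2, w)` and
`M(a+1, b+1, w) - M(a, b+1, w) = w / (b+1) · M(a+1, b+2, w)`,
each checked coefficientwise: both differences vanish in degree 0, and in degree `n+1` they are
the degree-`n` coefficients of the right-hand sides. Adding half of the second to the first gives
`M(a, b, w) + (b - 2a) w / (2b(b+1)) · M(a+1, b+2, w) = (M(a, b+1, w) + M(a+1, b+1, w)) / 2`,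
and for `a = α`, `b = 2p`, `w = -2iκz` the definition of `α` turns the coefficient
`(b - 2a) w / (2b(b+1))` into `(κ₃/(2p+1) - ψκ₁/(2p(2p+1))) z`.
-/

open Topology

lemma risingFac_succ_left (x : ℂ) (n : ℕ) : risingFac x (n + 1) = x * risingFac (x + 1) n := by
  induction n with
  | zero => simp [risingFac]
  | succ k ih => rw [risingFac, ih, risingFac]; push_cast; ring

lemma risingFac_ne_zero {b : ℂ} (hb : ∀ k : ℕ, b ≠ -k) (n : ℕ) : risingFac b n ≠ 0 := by
  induction n with
  | zero => simp [risingFac]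
  | succ k ih => exact mul_ne_zero ih fun h => hb k (by linear_combination h)

lemma summable_of_succ_eq_mul_of_tendsto_zero {K : Type*} [NormedField K] [CompleteSpace K]
    {f r : ℕ → K} (hf : ∀ n, f (n + 1) = r n * f n)
    (hr : Tendsto r atTop (𝓝 0)) : Summable f := by
  have hsmall : ∀ᶠ n in atTop, ‖r n‖ ≤ 1 / 2 :=
    hr.norm.eventually (ge_mem_nhds (by norm_num : ‖(0 : K)‖ < 1 / 2))
  refine summable_of_ratio_norm_eventually_le (r := 1 / 2) (by norm_num) ?_
  filter_upwards [hsmall] with n hn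
  rw [hf, norm_mul]
  exact mul_le_mul_of_nonneg_right hn (norm_nonneg _)

lemma tsum_sub_tsum_eq_mul_tsum_of_succ {K : Type*} [Field K] [TopologicalSpace K]
    [IsTopologicalRing K] [T2Space K] {f g h : ℕ → K} {c : K} (hf : Summable f) (hg : Summable g)
    (h0 : f 0 = g 0) (hsucc : ∀ n, f (n + 1) - g (n + 1) = c * h n) :
    ∑' n, f n - ∑' n, g n = c * ∑' n, h n := by
  rw [← hf.tsum_sub hg, (hf.sub hg).tsum_eq_zero_add]
  simp only [h0, sub_self, zero_add, hsucc, tsum_mul_left]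

def kummerTerm (a b w : ℂ) (n : ℕ) : ℂ := risingFac a n / risingFac b n * w ^ n / n.factorial

lemma kummerTerm_zero (a b w : ℂ) : kummerTerm a b w 0 = 1 := by simp [kummerTerm, risingFac]

lemma kummerTerm_succ (a b w : ℂ) (n : ℕ) :
    kummerTerm a b w (n + 1) = (a + n) / (b + n) * (w * (1 / (n + 1))) * kummerTerm a b w n := by
  simp only [kummerTerm, risingFac, pow_succ, Nat.factorial_succ]
  push_cast
  simp only [div_eq_mul_inv, mul_inv]
  ring

lemma summable_kummerTerm (a b w : ℂ) : Summable (kummerTerm a b w) := by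
  refine summable_of_succ_eq_mul_of_tendsto_zero (kummerTerm_succ a b w) ?_
  have hquot : Tendsto (fun n : ℕ => (a + n) / (b + n)) atTop (𝓝 1) := by
    simpa using tendsto_add_mul_div_add_mul_atTop_nhds a b 1 one_ne_zero
  simpa using hquot.mul (tendsto_one_div_add_atTop_nhds_zero_nat.const_mul w)

lemma kummerTerm_succ_sub_kummerTerm_succ_add_one_right {b : ℂ} (hb : ∀ k : ℕ, b ≠ -k)
    (a w : ℂ) (n : ℕ) :
    kummerTerm a b w (n + 1) - kummerTerm a (b + 1) w (n + 1)
      = a * w / (b * (b + 1)) * kummerTerm (a + 1) (b + 2) w n := by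
  have hb0 : b ≠ 0 := by simpa using hb 0
  have hb1 : b + 1 ≠ 0 := fun h => hb 1 (by push_cast; linear_combination h)
  have hbn : b + 1 + n ≠ 0 := fun h => hb (n + 1) (by push_cast; linear_combination h)
  have hB : risingFac (b + 2) n ≠ 0 :=
    risingFac_ne_zero (fun k h => hb (k + 2) (by push_cast; linear_combination h)) n
  have hshift : risingFac (b + 1) n = (b + 1) * risingFac (b + 2) n / (b + 1 + n) := by
    rw [eq_div_iff hbn]
    calc risingFac (b + 1) n * (b + 1 + n) = risingFac (b + 1) (n + 1) := rfl
      _ = (b + 1) * risingFac (b + 2) n := by rw [risingFac_succ_left]; ring_nf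
  simp only [kummerTerm]
  rw [risingFac_succ_left a, risingFac_succ_left b, risingFac_succ_left (b + 1),
    show b + 1 + 1 = b + 2 by ring, hshift, pow_succ, Nat.factorial_succ]
  push_cast
  field_simp
  ring

lemma kummerTerm_succ_add_one_left_sub (a b w : ℂ) (n : ℕ) :
    kummerTerm (a + 1) (b + 1) w (n + 1) - kummerTerm a (b + 1) w (n + 1)
      = w / (b + 1) * kummerTerm (a + 1) (b + 2) w n := by
  have hsplit : risingFac (b + 1) (n + 1) = (b + 1) * risingFac (b + 2) n := by
    rw [risingFac_succ_left]; ring_nf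
  simp only [kummerTerm]
  rw [hsplit, risingFac_succ_left a, risingFac, pow_succ, Nat.factorial_succ]
  push_cast
  field_simp
  ring

lemma kummerM_sub_kummerM_add_one_right {b : ℂ} (hb : ∀ k : ℕ, b ≠ -k) (a w : ℂ) :
    kummerM a b w - kummerM a (b + 1) w = a * w / (b * (b + 1)) * kummerM (a + 1) (b + 2) w :=
  tsum_sub_tsum_eq_mul_tsum_of_succ (summable_kummerTerm a b w) (summable_kummerTerm a (b + 1) w)
    ((kummerTerm_zero _ _ _).trans (kummerTerm_zero _ _ _).symm)
    (kummerTerm_succ_sub_kummerTerm_succ_add_one_right hb a w)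

lemma kummerM_add_one_left_sub (a b w : ℂ) :
    kummerM (a + 1) (b + 1) w - kummerM a (b + 1) w = w / (b + 1) * kummerM (a + 1) (b + 2) w :=
  tsum_sub_tsum_eq_mul_tsum_of_succ (summable_kummerTerm (a + 1) (b + 1) w)
    (summable_kummerTerm a (b + 1) w) ((kummerTerm_zero _ _ _).trans (kummerTerm_zero _ _ _).symm)
    (kummerTerm_succ_add_one_left_sub a b w)

lemma kummerM_add_mul_kummerM_eq_average {b : ℂ} (hb : ∀ k : ℕ, b ≠ -k) (a w : ℂ) :
    kummerM a b w + (b - 2 * a) / (2 * b * (b + 1)) * w * kummerM (a + 1) (b + 2) w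
      = 1 / 2 * kummerM a (b + 1) w + 1 / 2 * kummerM (a + 1) (b + 1) w := by
  have hb0 : b ≠ 0 := by simpa using hb 0
  have hb1 : b + 1 ≠ 0 := fun h => hb 1 (by push_cast; linear_combination h)
  have hright := kummerM_sub_kummerM_add_one_right hb a w
  have hleft := kummerM_add_one_left_sub a b w
  rw [← sub_eq_zero] at hright hleft ⊢
  field_simp at hright hleft ⊢
  linear_combination 2 * hright - b * hleft

/-- contiguous relation between Kummer functions used in the
rewriting of the formula for A. -/
theorem statement15 (p : ℝ) (hp : ∀ k : ℕ, p ≠ -((k : ℝ) + 1) / 2) (hp0 : p ≠ 0)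
    (κ1 κ2 κ3 ψ : ℝ)
    (hdet : (!![κ1, κ3; κ3, κ2] : Matrix (Fin 2) (Fin 2) ℝ).det ≠ 0)
    (κ : ℂ) (hκ : κ ^ 2 = ((!![κ1, κ3; κ3, κ2] : Matrix (Fin 2) (Fin 2) ℝ).det : ℂ))
    (σ : ℝ) (hσ : σ = 2 * p * κ3 - ψ * κ1)
    (m : ℂ) (hm : m = (σ : ℂ) / (2 * Complex.I * κ) + (p : ℂ)) :
    ∀ z : ℂ,
      kummerM m (2 * (p : ℂ)) (-2 * Complex.I * κ * z)
        - (ψ : ℂ) * (κ1 : ℂ) / (2 * (p : ℂ) * (2 * (p : ℂ) + 1)) * z *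
            kummerM (m + 1) (2 * (p : ℂ) + 2) (-2 * Complex.I * κ * z)
      = (1/2) * kummerM m (2 * (p : ℂ) + 1) (-2 * Complex.I * κ * z)
        + (1/2) * kummerM (m + 1) (2 * (p : ℂ) + 1) (-2 * Complex.I * κ * z)
        - (κ3 : ℂ) / (2 * (p : ℂ) + 1) * z *
            kummerM (m + 1) (2 * (p : ℂ) + 2) (-2 * Complex.I * κ * z) := by
  intro z
  have hκ0 : κ ≠ 0 := by
    rintro rfl
    exact hdet (by exact_mod_cast hκ.symm.trans (zero_pow two_ne_zero))
  have hb : ∀ k : ℕ, 2 * (p : ℂ) ≠ -k := by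
    intro k h
    have hreal : 2 * p = -(k : ℝ) := by exact_mod_cast h
    rcases k with _ | k
    · exact hp0 (by simpa using hreal)
    · exact hp k (by push_cast at hreal; linarith)
  have hp1 : 2 * (p : ℂ) + 1 ≠ 0 := fun h => hb 1 (by push_cast; linear_combination h)
  have hcoeff : (2 * (p : ℂ) - 2 * m) / (2 * (2 * p) * (2 * p + 1)) * (-2 * Complex.I * κ * z)
      = ((κ3 : ℂ) / (2 * p + 1) - ψ * κ1 / (2 * p * (2 * p + 1))) * z := by
    rw [hm, hσ]
    push_cast
    field_simp [Complex.ofReal_ne_zero.mpr hp0]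
    ring
  linear_combination kummerM_add_mul_kummerM_eq_average hb m (-2 * Complex.I * κ * z)
    - hcoeff * kummerM (m + 1) (2 * p + 2) (-2 * Complex.I * κ * z)
end
end
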